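/- arXiv:1512.02161 — 2 statements merged into one kernel-verified Lean document; each statement's English description precedes it below -/
import Mathlib

section
/- Let n ≥ 1, let d_1 ≤ d_2 ≤ ... ≤ d_k be positive integers with d_1 + ... + d_k = n(n+1)/2, and let G be the reduced bipartite graph with degree sequence (d_1,...,d_k). If the edge set of G can be partitioned into subgraphs F_1,...,F_n such that F_i has exactly i edges and each F_i is a star forest with centers in X, then ∑_{i=0}^{t-1} d_{k-i} ≥ ∑_{i=0}^{t-1} (n-i) for every t with 1 ≤ t ≤ k. -/
open Finset

/-- The degree in the bipartite edge set `E` of a vertex `x` of the part `X = Fin k`. -/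
def Xdeg {k m : ℕ} (E : Finset (Fin k × Fin m)) (x : Fin k) : ℕ :=
  (E.filter fun e => e.1 = x).card

/-- The degree in the bipartite edge set `E` of a vertex `y` of the part `Y = Fin m`. -/
def Ydeg {k m : ℕ} (E : Finset (Fin k × Fin m)) (y : Fin m) : ℕ :=
  (E.filter fun e => e.2 = y).card

/-- A star forest with centers in `X`: every vertex of `Y` has degree at most one. -/
def IsStarForest {k m : ℕ} (F : Finset (Fin k × Fin m)) : Prop :=
  ∀ y : Fin m, Ydeg F y ≤ 1

/-- The simple graph on the vertex set `Fin k ⊕ Fin m` determined by a set of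
bipartite edges. -/
def toGraph {k m : ℕ} (F : Finset (Fin k × Fin m)) : SimpleGraph (Fin k ⊕ Fin m) where
  Adj u v := (∃ x y, u = Sum.inl x ∧ v = Sum.inr y ∧ (x, y) ∈ F) ∨
             (∃ x y, v = Sum.inl x ∧ u = Sum.inr y ∧ (x, y) ∈ F)
  symm := ⟨fun _ _ h => Or.symm h⟩
  loopless := ⟨by
    rintro u (⟨x, y, rfl, h, -⟩ | ⟨x, y, rfl, h, -⟩) <;> cases h⟩

/-- `F` is isomorphic to a subgraph of `F'`: there is an injective map of vertices
carrying edges to edges. -/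
def IsoToSubgraph {k m k' m' : ℕ} (F : Finset (Fin k × Fin m))
    (F' : Finset (Fin k' × Fin m')) : Prop :=
  ∃ f : Fin k ⊕ Fin m → Fin k' ⊕ Fin m',
    Function.Injective f ∧ ∀ u v, (toGraph F).Adj u v → (toGraph F').Adj (f u) (f v)

/-- `c ⪯ c'` : after reordering the components of each vector in nondecreasing order,
each component of `c` is at most the corresponding component of `c'`. -/
def Prec {k : ℕ} (c c' : Fin k → ℕ) : Prop :=
  ∀ i : Fin k, c (Tuple.sort c i) ≤ c' (Tuple.sort c' i)

/-- A star-forest ascending subgraph decomposition of the edge set `E`: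
the `F i` partition `E`, `F i` has `i + 1` edges (`1`-based: `i` edges),
every `F i` is a star forest with centers in `X`, and each `F i` is isomorphic
to a subgraph of the next one. -/
def StarForestASD {k m n : ℕ} (E : Finset (Fin k × Fin m))
    (F : Fin n → Finset (Fin k × Fin m)) : Prop :=
  (∀ i j, i ≠ j → Disjoint (F i) (F j)) ∧
  Finset.univ.biUnion F = E ∧
  (∀ i, (F i).card = (i : ℕ) + 1) ∧
  (∀ i, IsStarForest (F i)) ∧
  ∀ j : ℕ, (h : j + 1 < n) → IsoToSubgraph (F ⟨j, Nat.lt_of_succ_lt h⟩) (F ⟨j + 1, h⟩)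

/-- The reduced bipartite graph with (1-based) degree sequence `d 1 ≤ ⋯ ≤ d k`:
`x i` is adjacent exactly to `y 1, …, y (d i)`. -/
def reducedEdges (k : ℕ) (d : ℕ → ℕ) : Finset (Fin k × Fin (d k)) :=
  Finset.univ.filter fun e => (e.2 : ℕ) + 1 ≤ d ((e.1 : ℕ) + 1)

/-- The columns of `A` satisfy `A_1 ⪯ A_2 ⪯ ⋯ ⪯ A_n`. -/
def AscendingCols {k n : ℕ} (A : Matrix (Fin k) (Fin n) ℕ) : Prop :=
  ∀ j : ℕ, (h : j + 1 < n) →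
    Prec (fun i => A i ⟨j, Nat.lt_of_succ_lt h⟩) (fun i => A i ⟨j + 1, h⟩)

/-- A sequential coloring of the bipartite multigraph encoded by the matrix `A`:
the parallel edge class joining `x i` and `z j` receives the set `S i j` of colors,
the coloring is proper, and the edges at `x i` receive exactly colors `{1, …, d i}`. -/
def SeqColoring {k n : ℕ} (A : Matrix (Fin k) (Fin n) ℕ) (d : Fin k → ℕ)
    (S : Fin k → Fin n → Finset ℕ) : Prop :=
  (∀ i j, (S i j).card = A i j) ∧
  (∀ j : Fin n, ∀ i i' : Fin k, i ≠ i' → Disjoint (S i j) (S i' j)) ∧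
  (∀ i : Fin k, ∀ j j' : Fin n, j ≠ j' → Disjoint (S i j) (S i j')) ∧
  (∀ i : Fin k, Finset.univ.biUnion (fun j => S i j) = Finset.Icc 1 (d i))

/-!
Pick a threshold `D` lying between the `k - t` smallest and the `t` largest degrees. In a star
forest with centers in `X` each of `y_1, …, y_D` carries at most one edge, so `F_i` has at least
`i - D` edges at the vertices `y_j` with `j > D`, and `G` has at least `∑ᵢ (i - D)⁺` such edges.
In the reduced graph these edges all sit at the `t` vertices of largest degree, which carry
exactly `∑_{r<t} (d_{k-r} - D)` of them. Since `∑_{r<t} (n - r) ≤ t D + ∑ᵢ (i - D)⁺`, the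
inequality follows.
-/

lemma IsStarForest.injOn_snd {k m : ℕ} {F : Finset (Fin k × Fin m)} (hF : IsStarForest F) :
    Set.InjOn Prod.snd (F : Set (Fin k × Fin m)) := by
  intro e he e' he' h
  have : #(F.filter fun x => x.2 = e.2) ≤ 1 := hF e.2
  exact card_le_one.1 this e (mem_filter.2 ⟨he, rfl⟩) e' (mem_filter.2 ⟨he', h.symm⟩)

lemma IsStarForest.card_sub_le_card_filter_le_snd {k m : ℕ} {F : Finset (Fin k × Fin m)}
    (hF : IsStarForest F) (D : ℕ) : #F - D ≤ #(F.filter fun e => D ≤ (e.2 : ℕ)) := by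
  have hsmall : #(F.filter fun e => ¬ D ≤ (e.2 : ℕ)) ≤ D := by
    simpa using card_le_card_of_injOn (fun e : Fin k × Fin m => (e.2 : ℕ)) (t := range D)
      (fun e he => by simp_all)
      (Fin.val_injective.comp_injOn (hF.injOn_snd.mono (coe_subset.2 (filter_subset _ _))))
  have := card_filter_add_card_filter_not (s := F) (fun e => D ≤ (e.2 : ℕ))
  omega

lemma sum_sub_le_card_filter_le_snd {k m n : ℕ} {E : Finset (Fin k × Fin m)}
    {F : Fin n → Finset (Fin k × Fin m)} (hdisj : ∀ i j, i ≠ j → Disjoint (F i) (F j))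
    (hunion : univ.biUnion F = E) (hcard : ∀ i, #(F i) = (i : ℕ) + 1)
    (hstar : ∀ i, IsStarForest (F i)) (D : ℕ) :
    ∑ i ∈ range n, (i + 1 - D) ≤ #(E.filter fun e => D ≤ (e.2 : ℕ)) := by
  rw [← hunion, filter_biUnion,
    card_biUnion fun i _ j _ hij => disjoint_filter_filter (hdisj i j hij),
    ← Fin.sum_univ_eq_sum_range (fun i => i + 1 - D)]
  exact sum_le_sum fun i _ => hcard i ▸ (hstar i).card_sub_le_card_filter_le_snd D

lemma Fin.card_filter_le_val_lt {m : ℕ} (D a : ℕ) (ha : a ≤ m) :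
    #(univ.filter fun y : Fin m => D ≤ (y : ℕ) ∧ (y : ℕ) < a) = a - D := by
  rw [← Nat.card_Ico, ← card_map Fin.valEmbedding]
  congr 1
  ext b
  simp only [mem_map, mem_filter, mem_univ, true_and, Fin.valEmbedding_apply, mem_Ico]
  constructor
  · rintro ⟨y, hy, rfl⟩; exact hy
  · intro hb; exact ⟨⟨b, by omega⟩, hb, rfl⟩

lemma card_filter_reducedEdges {k : ℕ} {d : ℕ → ℕ} (hle : ∀ i, 1 ≤ i → i ≤ k → d i ≤ d k)
    (D : ℕ) :
    #((reducedEdges k d).filter fun e => D ≤ (e.2 : ℕ)) = ∑ i ∈ range k, (d (i + 1) - D) := by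
  rw [reducedEdges, filter_filter, card_filter, Fintype.sum_prod_type,
    ← Fin.sum_univ_eq_sum_range]
  refine sum_congr rfl fun x _ => ?_
  rw [← card_filter, ← Fin.card_filter_le_val_lt D _ (hle _ (by omega) (by omega))]
  congr 1
  ext y
  simp only [mem_filter, mem_univ, true_and]
  omega

lemma exists_threshold {d : ℕ → ℕ} {k t : ℕ}
    (hmono : ∀ i j, 1 ≤ i → i ≤ j → j ≤ k → d i ≤ d j) (htk : t ≤ k) :
    ∃ D, (∀ i, 1 ≤ i → i ≤ k - t → d i ≤ D) ∧ ∀ r < t, D ≤ d (k - r) := by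
  rcases htk.lt_or_eq with htk | rfl
  · exact ⟨d (k - t), fun i h1 h2 => hmono _ _ h1 h2 (by omega),
      fun r hr => hmono _ _ (by omega) (by omega) (by omega)⟩
  · exact ⟨0, fun i h1 h2 => by omega, fun _ _ => Nat.zero_le _⟩

lemma sum_top_eq_mul_add_sum_tsub {d : ℕ → ℕ} {k t D : ℕ} (htk : t ≤ k)
    (hlow : ∀ i, 1 ≤ i → i ≤ k - t → d i ≤ D) (hhigh : ∀ r < t, D ≤ d (k - r)) :
    ∑ r ∈ range t, d (k - r) = t * D + ∑ i ∈ range k, (d (i + 1) - D) := by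
  have hzero : ∑ r ∈ Ico t k, (d (k - 1 - r + 1) - D) = 0 :=
    sum_eq_zero fun r hr => by
      rw [mem_Ico] at hr
      have := hlow (k - 1 - r + 1) (by omega) (by omega)
      omega
  rw [← sum_range_reflect (fun i => d (i + 1) - D) k, ← sum_range_add_sum_Ico _ htk, hzero,
    add_zero, show t * D = ∑ _r ∈ range t, D by simp, ← sum_add_distrib]
  refine sum_congr rfl fun r hr => ?_
  rw [mem_range] at hr
  have := hhigh r hr
  rw [show k - 1 - r + 1 = k - r by omega]
  omega

lemma sum_range_sub_le (n t D : ℕ) :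
    ∑ i ∈ range t, (n - i) ≤ t * D + ∑ i ∈ range n, (i + 1 - D) := by
  calc ∑ i ∈ range t, (n - i)
      ≤ ∑ i ∈ range t, (D + (n - i - D)) := sum_le_sum fun i _ => by omega
    _ = t * D + ∑ i ∈ range t, (n - i - D) := by
        rw [sum_add_distrib, sum_const, card_range, smul_eq_mul]
    _ ≤ t * D + ∑ i ∈ range n, (n - i - D) := by
        refine Nat.add_le_add_left (sum_le_sum_of_ne_zero fun i _ hi => mem_range.2 ?_) _
        omega
    _ = t * D + ∑ i ∈ range n, (i + 1 - D) := by
        rw [← sum_range_reflect (fun i => i + 1 - D) n]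
        refine congrArg (t * D + ·) (sum_congr rfl fun i hi => ?_)
        rw [mem_range] at hi
        omega

theorem statement2_general (n k : ℕ) (d : ℕ → ℕ)
    (hmono : ∀ i j, 1 ≤ i → i ≤ j → j ≤ k → d i ≤ d j)
    (F : Fin n → Finset (Fin k × Fin (d k)))
    (hdisj : ∀ i j, i ≠ j → Disjoint (F i) (F j))
    (hunion : Finset.univ.biUnion F = reducedEdges k d)
    (hcard : ∀ i, (F i).card = (i : ℕ) + 1)
    (hstar : ∀ i, IsStarForest (F i)) :
    ∀ t : ℕ, 1 ≤ t → t ≤ k →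
      ∑ i ∈ Finset.range t, (n - i) ≤ ∑ i ∈ Finset.range t, d (k - i) := by
  intro t _ htk
  obtain ⟨D, hlow, hhigh⟩ := exists_threshold hmono htk
  calc ∑ i ∈ range t, (n - i)
      ≤ t * D + ∑ i ∈ range n, (i + 1 - D) := sum_range_sub_le n t D
    _ ≤ t * D + #((reducedEdges k d).filter fun e => D ≤ (e.2 : ℕ)) :=
        Nat.add_le_add_left (sum_sub_le_card_filter_le_snd hdisj hunion hcard hstar D) _
    _ = ∑ i ∈ range t, d (k - i) := by
        rw [card_filter_reducedEdges (fun i h1 h2 => hmono i k h1 h2 le_rfl),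
          sum_top_eq_mul_add_sum_tsub htk hlow hhigh]

/-- **Lemma (necessary condition, reduced graphs).** If the reduced bipartite graph with
degree sequence `d 1 ≤ ⋯ ≤ d k` admits a decomposition into star forests
`F 1, …, F n` with centers in `X`, where `F i` has `i` edges, then
`∑_{i=0}^{t-1} d (k-i) ≥ ∑_{i=0}^{t-1} (n-i)` for every `1 ≤ t ≤ k`. -/
theorem statement2 (n k : ℕ) (hn : 1 ≤ n) (d : ℕ → ℕ)
    (hpos : ∀ i, 1 ≤ i → i ≤ k → 1 ≤ d i)
    (hmono : ∀ i j, 1 ≤ i → i ≤ j → j ≤ k → d i ≤ d j)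
    (hsum : ∑ i ∈ Finset.Icc 1 k, d i = n * (n + 1) / 2)
    (F : Fin n → Finset (Fin k × Fin (d k)))
    (hdisj : ∀ i j, i ≠ j → Disjoint (F i) (F j))
    (hunion : Finset.univ.biUnion F = reducedEdges k d)
    (hcard : ∀ i, (F i).card = (i : ℕ) + 1)
    (hstar : ∀ i, IsStarForest (F i)) :
    ∀ t : ℕ, 1 ≤ t → t ≤ k →
      ∑ i ∈ Finset.range t, (n - i) ≤ ∑ i ∈ Finset.range t, d (k - i) :=
  statement2_general n k d hmono F hdisj hunion hcard hstar
end

section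
/- Let G be a bipartite graph with parts A = {a_1,...,a_k} and B, let d_i be the degree of a_i in G, and let G_R be the reduced bipartite graph of G, with parts A and Y' = {y'_1,...,y'_{max d}}, where a_i is adjacent in G_R exactly to y'_1,...,y'_{d_i}. Suppose the edge set of G_R is partitioned into subgraphs F'_1,...,F'_t, each a star forest with centers in A. Then the edge set of G can be partitioned into subgraphs F_1,...,F_t, each a star forest with centers in A, such that for every i ∈ {1,...,t} and every j ∈ {1,...,k} the degree of a_j in F_i equals the degree of a_j in F'_i (in particular, F_i is isomorphic to F'_i for each i). -/
/-!
Number the cells of row `x` of `G_R` by their positions `0, …, d x - 1`. We must send each cell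
`(x, j)` to a `G`-neighbour `Y (x, j)` of `x`, injectively along each row (so bijectively, as
both sides have `d x` elements) and injectively on each colour class `F' i`. This is a list
edge-colouring problem for the bipartite multigraph of rows versus colour classes, with lists of
size `d x`. Following Galvin, orient conflicts towards higher positions along a row and towards
lower positions within a colour class. A colour class has at most one cell per position, so the
cell `(x, j)` has at most `(d x - 1 - j) + j < d x` out-neighbours; and every set of cells has a
kernel, by the Gale–Shapley argument. Colouring a kernel of the cells admitting a colour `y` with
`y` and recursing on the remaining colours then succeeds. Counting edges, the cells are mapped
onto all of `G`.
-/

open Finset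

lemma disjoint_image_of_injOn {α β : Type*} [DecidableEq β] {s t u : Finset α} {f : α → β}
    (hf : Set.InjOn f u) (hs : s ⊆ u) (ht : t ⊆ u) (h : Disjoint s t) :
    Disjoint (s.image f) (t.image f) := by
  simp only [disjoint_iff_ne, mem_image]
  rintro _ ⟨a, ha, rfl⟩ _ ⟨b, hb, rfl⟩ hab
  exact disjoint_iff_ne.mp h a ha b hb (hf (hs ha) (ht hb) hab)

section Galvin

variable {α ι κ : Type*} (row : α → ι) (col : α → κ) (pos : α → ℕ)

def GalvinAdj (e f : α) : Prop :=
  row f = row e ∧ pos e < pos f ∨ col f = col e ∧ pos f < pos e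

instance [DecidableEq ι] [DecidableEq κ] : DecidableRel (GalvinAdj row col pos) :=
  fun _ _ => inferInstanceAs (Decidable (_ ∨ _))

namespace GaleShapley

open scoped Classical

variable (U : Finset α)

/-- Each row proposes its cell of highest position that has not been rejected yet. -/
noncomputable def proposals (R : Finset α) : Finset α :=
  {e ∈ U | e ∉ R ∧ ∀ f ∈ U, row f = row e → pos e < pos f → f ∈ R}

/-- Each column rejects all its proposals but the one of lowest position. -/
noncomputable def rejections (R : Finset α) : Finset α :=
  {e ∈ proposals row pos U R | ∃ f ∈ proposals row pos U R, col f = col e ∧ pos f < pos e}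

def IsJustified (R : Finset α) : Prop :=
  ∀ e ∈ R, ∃ f ∈ proposals row pos U R, col f = col e ∧ pos f < pos e

variable {row col pos U}

lemma proposals_subset (R : Finset α) : proposals row pos U R ⊆ U :=
  filter_subset _ _

lemma IsJustified.union_rejections {R : Finset α} (hR : IsJustified row col pos U R) :
    IsJustified row col pos U (R ∪ rejections row col pos U R) := by
  intro e he
  obtain ⟨w, hw, hwc, hwp⟩ : ∃ f ∈ proposals row pos U R, col f = col e ∧ pos f < pos e := by
    rcases mem_union.mp he with he | he
    · exact hR e he
    · exact (mem_filter.mp he).2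
  -- the proposal of lowest position in the column of `e` survives the new rejections
  obtain ⟨b, hb, hbmin⟩ := exists_min_image {f ∈ proposals row pos U R | col f = col e} pos
    ⟨w, mem_filter.mpr ⟨hw, hwc⟩⟩
  obtain ⟨hbP, hbc⟩ := mem_filter.mp hb
  obtain ⟨hbU, hbR, hbrow⟩ := mem_filter.mp hbP
  have hb_not_rejected : b ∉ rejections row col pos U R := fun hbrej => by
    obtain ⟨g, hg, hgc, hgp⟩ := (mem_filter.mp hbrej).2
    exact (hbmin g (mem_filter.mpr ⟨hg, hgc.trans hbc⟩)).not_gt hgp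
  refine ⟨b, mem_filter.mpr ⟨hbU, ?_, fun f hf hr hp => mem_union_left _ (hbrow f hf hr hp)⟩,
    hbc, (hbmin w (mem_filter.mpr ⟨hw, hwc⟩)).trans_lt hwp⟩
  simpa only [mem_union, not_or] using ⟨hbR, hb_not_rejected⟩

variable (row col pos U) in
lemma exists_isJustified_rejections_eq_empty :
    ∃ R ⊆ U, IsJustified row col pos U R ∧ rejections row col pos U R = ∅ := by
  obtain ⟨R, hR, hmax⟩ := exists_max_image {R ∈ U.powerset | IsJustified row col pos U R} card
    ⟨∅, mem_filter.mpr ⟨empty_mem_powerset U, fun e he => absurd he (notMem_empty e)⟩⟩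
  obtain ⟨hRU, hRJ⟩ := mem_filter.mp hR
  rw [mem_powerset] at hRU
  refine ⟨R, hRU, hRJ, eq_empty_of_forall_notMem fun e he => ?_⟩
  have hrejU : rejections row col pos U R ⊆ U := (filter_subset _ _).trans (proposals_subset R)
  have hle := hmax _ (mem_filter.mpr
    ⟨mem_powerset.mpr (union_subset hRU hrejU), hRJ.union_rejections⟩)
  have hfix : R ∪ rejections row col pos U R = R :=
    (eq_of_subset_of_card_le subset_union_left hle).symm
  exact (mem_filter.mp (mem_filter.mp he).1).2.1 (hfix ▸ mem_union_right _ he)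

lemma row_ne_of_mem_proposals (hrow : Set.InjOn (fun e => (row e, pos e)) U) {R : Finset α}
    {e f : α} (he : e ∈ proposals row pos U R) (hf : f ∈ proposals row pos U R) (hef : e ≠ f) :
    row e ≠ row f := by
  obtain ⟨heU, heR, he_row⟩ := mem_filter.mp he
  obtain ⟨hfU, hfR, hf_row⟩ := mem_filter.mp hf
  intro hr
  rcases lt_trichotomy (pos e) (pos f) with h | h | h
  · exact hfR (he_row f hfU hr.symm h)
  · exact hef (hrow heU hfU (Prod.ext hr h))
  · exact heR (hf_row e heU hr h)

lemma col_ne_of_mem_proposals (hcol : Set.InjOn (fun e => (col e, pos e)) U) {R : Finset α}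
    (hrej : rejections row col pos U R = ∅) {e f : α} (he : e ∈ proposals row pos U R)
    (hf : f ∈ proposals row pos U R) (hef : e ≠ f) : col e ≠ col f := by
  have hUe := proposals_subset R he
  have hUf := proposals_subset R hf
  intro hc
  rcases lt_trichotomy (pos e) (pos f) with h | h | h
  · exact notMem_empty f (hrej ▸ mem_filter.mpr ⟨hf, e, he, hc, h⟩)
  · exact hef (hcol hUe hUf (Prod.ext hc h))
  · exact notMem_empty e (hrej ▸ mem_filter.mpr ⟨he, f, hf, hc.symm, h⟩)

lemma exists_galvinAdj_of_notMem_proposals {R : Finset α} (hR : IsJustified row col pos U R)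
    {e : α} (heU : e ∈ U) (he : e ∉ proposals row pos U R) :
    ∃ f ∈ proposals row pos U R, GalvinAdj row col pos e f := by
  by_cases heR : e ∈ R
  · obtain ⟨f, hf, hfc, hfp⟩ := hR e heR
    exact ⟨f, hf, Or.inr ⟨hfc, hfp⟩⟩
  -- otherwise the row of `e` proposes one of its cells above `e`
  obtain ⟨f, hfU, hfr, hfp, hfR⟩ : ∃ f ∈ U, row f = row e ∧ pos e < pos f ∧ f ∉ R := by
    by_contra! h
    exact he (mem_filter.mpr ⟨heU, heR, fun f hf hr hp => h f hf hr hp⟩)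
  obtain ⟨b, hb, hbmax⟩ := exists_max_image {g ∈ U | row g = row e ∧ pos e < pos g ∧ g ∉ R} pos
    ⟨f, mem_filter.mpr ⟨hfU, hfr, hfp, hfR⟩⟩
  obtain ⟨hbU, hbr, hbp, hbR⟩ := mem_filter.mp hb
  refine ⟨b, mem_filter.mpr ⟨hbU, hbR, fun g hg hgr hgp => ?_⟩, Or.inl ⟨hbr, hbp⟩⟩
  by_contra hgR
  exact (hbmax g (mem_filter.mpr ⟨hg, hgr.trans hbr, hbp.trans hgp, hgR⟩)).not_gt hgp

end GaleShapley

open GaleShapley in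
theorem exists_kernel_galvinAdj (U : Finset α) (hrow : Set.InjOn (fun e => (row e, pos e)) U)
    (hcol : Set.InjOn (fun e => (col e, pos e)) U) :
    ∃ K ⊆ U, (∀ e ∈ K, ∀ f ∈ K, e ≠ f → row e ≠ row f ∧ col e ≠ col f) ∧
      ∀ e ∈ U, e ∉ K → ∃ f ∈ K, GalvinAdj row col pos e f := by
  obtain ⟨R, -, hR, hrej⟩ := exists_isJustified_rejections_eq_empty row col pos U
  exact ⟨proposals row pos U R, proposals_subset R,
    fun e he f hf hef => ⟨row_ne_of_mem_proposals hrow he hf hef,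
      col_ne_of_mem_proposals hcol hrej he hf hef⟩,
    fun e heU he => exists_galvinAdj_of_notMem_proposals hR heU he⟩

variable {β : Type*} [DecidableEq α] [DecidableEq ι] [DecidableEq κ] [DecidableEq β]

lemma card_galvinAdj_sdiff_lt_card_inter {L : α → Finset β} {S : Finset β} {y : β} (hy : y ∉ S)
    {W K : Finset α} (hKW : K ⊆ W)
    (hKabs : ∀ e ∈ W, y ∈ L e → e ∉ K → ∃ f ∈ K, GalvinAdj row col pos e f)
    (hL : ∀ e ∈ W, #{f ∈ W | GalvinAdj row col pos e f} < #(L e ∩ insert y S)) :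
    ∀ e ∈ W \ K, #{f ∈ W \ K | GalvinAdj row col pos e f} < #(L e ∩ S) := by
  intro e he
  obtain ⟨heW, heK⟩ := mem_sdiff.mp he
  have hsub : {f ∈ W \ K | GalvinAdj row col pos e f} ⊆ {f ∈ W | GalvinAdj row col pos e f} :=
    filter_subset_filter _ sdiff_subset
  have := hL e heW
  by_cases hye : y ∈ L e
  · -- `e` loses the colour `y`, but also an out-neighbour in `K`
    obtain ⟨g, hgK, hg⟩ := hKabs e heW hye heK
    have hlt := card_lt_card (ssubset_iff_of_subset hsub |>.mpr
      ⟨g, mem_filter.mpr ⟨hKW hgK, hg⟩, fun h => (mem_sdiff.mp (mem_filter.mp h).1).2 hgK⟩)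
    rw [inter_insert_of_mem hye, card_insert_of_notMem fun h => hy (mem_inter.mp h).2] at this
    omega
  · rw [inter_insert_of_notMem hye] at this
    exact (card_le_card hsub).trans_lt this

theorem exists_listColoring_inter [Nonempty (α → β)] (L : α → Finset β) (S : Finset β)
    (W : Finset α) (hrow : Set.InjOn (fun e => (row e, pos e)) W)
    (hcol : Set.InjOn (fun e => (col e, pos e)) W)
    (hL : ∀ e ∈ W, #{f ∈ W | GalvinAdj row col pos e f} < #(L e ∩ S)) :
    ∃ Y : α → β, (∀ e ∈ W, Y e ∈ L e ∩ S) ∧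
      ∀ e ∈ W, ∀ f ∈ W, e ≠ f → (row e = row f ∨ col e = col f) → Y e ≠ Y f := by
  induction S using Finset.induction_on generalizing W with
  | empty =>
    refine ⟨Classical.arbitrary _, fun e he => ?_, fun e he => ?_⟩ <;> simpa using hL e he
  | insert y S hy ih =>
    obtain ⟨K, hKU, hKind, hKabs⟩ := exists_kernel_galvinAdj row col pos {e ∈ W | y ∈ L e}
      (hrow.mono (filter_subset _ _)) (hcol.mono (filter_subset _ _))
    have hyK : ∀ e ∈ K, y ∈ L e := fun e he => (mem_filter.mp (hKU he)).2
    have hL' := card_galvinAdj_sdiff_lt_card_inter row col pos hy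
      (hKU.trans (filter_subset _ _)) (fun e he hye => hKabs e (mem_filter.mpr ⟨he, hye⟩)) hL
    obtain ⟨Y, hYL, hYne⟩ := ih (W \ K) (hrow.mono sdiff_subset) (hcol.mono sdiff_subset) hL'
    have hYS : ∀ e ∈ W, e ∉ K → Y e ∈ S := fun e he heK =>
      (mem_inter.mp (hYL e (mem_sdiff.mpr ⟨he, heK⟩))).2
    refine ⟨fun e => if e ∈ K then y else Y e, fun e he => ?_, fun e he f hf hef hshare => ?_⟩
    · by_cases heK : e ∈ K
      · simp [heK, hyK e heK]
      · simpa [heK] using inter_subset_inter_left (subset_insert y S)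
          (hYL e (mem_sdiff.mpr ⟨he, heK⟩))
    · by_cases heK : e ∈ K <;> by_cases hfK : f ∈ K <;> simp only [heK, hfK, if_true, if_false]
      · have := hKind e heK f hfK hef
        tauto
      · exact fun h => hy (h ▸ hYS f hf hfK)
      · exact fun h => hy (h ▸ hYS e he heK)
      · exact hYne e (mem_sdiff.mpr ⟨he, heK⟩) f (mem_sdiff.mpr ⟨hf, hfK⟩) hef hshare

theorem exists_listColoring [Nonempty (α → β)] (L : α → Finset β) (W : Finset α)
    (hrow : Set.InjOn (fun e => (row e, pos e)) W) (hcol : Set.InjOn (fun e => (col e, pos e)) W)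
    (hL : ∀ e ∈ W, #{f ∈ W | GalvinAdj row col pos e f} < #(L e)) :
    ∃ Y : α → β, (∀ e ∈ W, Y e ∈ L e) ∧
      ∀ e ∈ W, ∀ f ∈ W, e ≠ f → (row e = row f ∨ col e = col f) → Y e ≠ Y f := by
  have hLS : ∀ e ∈ W, L e ∩ W.biUnion L = L e := fun e he =>
    inter_eq_left.mpr (subset_biUnion_of_mem L he)
  obtain ⟨Y, hYL, hY⟩ := exists_listColoring_inter row col pos L (W.biUnion L) W hrow hcol
    fun e he => by rw [hLS e he]; exact hL e he
  exact ⟨Y, fun e he => hLS e he ▸ hYL e he, hY⟩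

end Galvin

section Reduced

variable {k m n : ℕ}

/-- The edge set of the reduced graph `G_R` for the degrees `d`. -/
def reducedEdgeSet (n : ℕ) (d : Fin k → ℕ) : Finset (Fin k × Fin n) :=
  univ.filter fun e => (e.2 : ℕ) + 1 ≤ d e.1

lemma Xdeg_eq_card_filter (E : Finset (Fin k × Fin m)) (x : Fin k) :
    Xdeg E x = #{y | (x, y) ∈ E} := by
  refine card_nbij' Prod.snd (fun y => (x, y)) ?_ ?_ ?_ fun _ _ => rfl
  · rintro ⟨a, b⟩ he
    obtain ⟨hE, rfl⟩ := mem_filter.mp he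
    exact mem_filter.mpr ⟨mem_univ b, hE⟩
  · intro y hy
    exact mem_filter.mpr ⟨(mem_filter.mp hy).2, rfl⟩
  · rintro ⟨a, b⟩ he
    obtain ⟨-, rfl⟩ := mem_filter.mp he
    rfl

lemma card_eq_sum_Xdeg (E : Finset (Fin k × Fin m)) : #E = ∑ x, Xdeg E x :=
  card_eq_sum_card_fiberwise fun _ _ => mem_univ _

lemma Xdeg_reducedEdgeSet (d : Fin k → ℕ) {x : Fin k} (hx : d x ≤ n) :
    Xdeg (reducedEdgeSet n d) x = d x := by
  simp only [Xdeg_eq_card_filter, reducedEdgeSet, mem_filter, mem_univ, true_and,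
    Nat.add_one_le_iff, Fin.card_filter_val_lt]
  exact min_eq_right hx

lemma card_reducedEdgeSet_Xdeg (G : Finset (Fin k × Fin m)) (hG : ∀ x, Xdeg G x ≤ n) :
    #(reducedEdgeSet n (Xdeg G)) = #G := by
  rw [card_eq_sum_Xdeg, card_eq_sum_Xdeg G]
  exact sum_congr rfl fun x _ => Xdeg_reducedEdgeSet _ (hG x)

lemma card_galvinAdj_reducedEdgeSet_lt {κ : Type*} [DecidableEq κ] (d : Fin k → ℕ)
    (col : Fin k × Fin n → κ)
    (hcol : Set.InjOn (fun e => (col e, (e.2 : ℕ))) (reducedEdgeSet n d))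
    {e : Fin k × Fin n} (he : e ∈ reducedEdgeSet n d) :
    #{f ∈ reducedEdgeSet n d | GalvinAdj Prod.fst col (fun f => (f.2 : ℕ)) e f} < d e.1 := by
  set R := reducedEdgeSet n d
  have hR : ∀ f ∈ R, (f.2 : ℕ) + 1 ≤ d f.1 := fun f hf => (mem_filter.mp hf).2
  have hrow : #{f ∈ R | f.1 = e.1 ∧ (e.2 : ℕ) < f.2} ≤ #(Ioo (e.2 : ℕ) (d e.1)) := by
    refine card_le_card_of_injOn (fun f => (f.2 : ℕ)) (fun f hf => ?_) fun f hf g hg hfg => ?_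
    · obtain ⟨hfR, hf1, hf2⟩ := mem_filter.mp hf
      have := hR f hfR
      rw [hf1] at this
      exact mem_Ioo.mpr ⟨hf2, this⟩
    · exact Prod.ext ((mem_filter.mp hf).2.1.trans (mem_filter.mp hg).2.1.symm) (Fin.ext hfg)
  have hcolumn : #{f ∈ R | col f = col e ∧ (f.2 : ℕ) < e.2} ≤ #(Iio (e.2 : ℕ)) := by
    refine card_le_card_of_injOn (fun f => (f.2 : ℕ))
      (fun f hf => mem_Iio.mpr (mem_filter.mp hf).2.2) fun f hf g hg hfg => ?_
    exact hcol (mem_filter.mp hf).1 (mem_filter.mp hg).1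
      (Prod.ext ((mem_filter.mp hf).2.1.trans (mem_filter.mp hg).2.1.symm) hfg)
  have hsplit : {f ∈ R | GalvinAdj Prod.fst col (fun f => (f.2 : ℕ)) e f} ⊆
      {f ∈ R | f.1 = e.1 ∧ (e.2 : ℕ) < f.2} ∪ {f ∈ R | col f = col e ∧ (f.2 : ℕ) < e.2} := by
    intro f hf
    obtain ⟨hfR, hadj⟩ := mem_filter.mp hf
    rcases hadj with h | h
    · exact mem_union_left _ (mem_filter.mpr ⟨hfR, h⟩)
    · exact mem_union_right _ (mem_filter.mpr ⟨hfR, h⟩)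
  have := (card_le_card hsplit).trans (card_union_le _ _)
  have := hR e he
  simp only [Nat.card_Ioo, Nat.card_Iio] at hrow hcolumn
  omega

theorem exists_lift_of_starForest_partition {β : Type*} [DecidableEq β]
    [Nonempty (Fin k × Fin n → β)] (d : Fin k → ℕ) (L : Fin k → Finset β)
    (hL : ∀ x, d x ≤ #(L x)) {t : ℕ} (F' : Fin t → Finset (Fin k × Fin n))
    (hdisj' : ∀ i j, i ≠ j → Disjoint (F' i) (F' j))
    (hunion' : univ.biUnion F' = reducedEdgeSet n d) (hstar' : ∀ i, IsStarForest (F' i)) :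
    ∃ Y : Fin k × Fin n → β, (∀ e ∈ reducedEdgeSet n d, Y e ∈ L e.1) ∧
      Set.InjOn (fun e => (e.1, Y e)) (reducedEdgeSet n d) ∧ ∀ i, Set.InjOn Y (F' i) := by
  classical
  set R := reducedEdgeSet n d
  have hsub : ∀ i, F' i ⊆ R := fun i => hunion' ▸ subset_biUnion_of_mem F' (mem_univ i)
  -- cells of `R` lie in exactly one `F' i`, so the set of such `i` serves as the colour
  let col : Fin k × Fin n → Finset (Fin t) := fun e => {i | e ∈ F' i}
  have hcol_of_mem : ∀ i, ∀ e ∈ F' i, col e = {i} := by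
    intro i e he
    ext j
    simp only [col, mem_filter, mem_univ, true_and, mem_singleton]
    exact ⟨fun hj => by_contra fun hji => disjoint_left.mp (hdisj' j i hji) hj he,
      fun h => h ▸ he⟩
  have hcolInj : Set.InjOn (fun e => (col e, (e.2 : ℕ))) R := by
    intro e he f hf hef
    obtain ⟨i, -, hi⟩ := mem_biUnion.mp (hunion' ▸ he : e ∈ univ.biUnion F')
    obtain ⟨hc, hp⟩ : col e = col f ∧ (e.2 : ℕ) = f.2 := Prod.ext_iff.mp hef
    have hfi : f ∈ F' i := (mem_filter.mp (hc ▸ mem_filter.mpr ⟨mem_univ i, hi⟩ : i ∈ col f)).2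
    exact card_le_one.mp (hstar' i e.2) e (mem_filter.mpr ⟨hi, rfl⟩) f
      (mem_filter.mpr ⟨hfi, (Fin.ext hp).symm⟩)
  have hrowInj : Set.InjOn (fun e : Fin k × Fin n => (e.1, (e.2 : ℕ))) R :=
    fun e _ f _ h => Prod.ext (Prod.ext_iff.mp h).1 (Fin.ext (Prod.ext_iff.mp h).2)
  obtain ⟨Y, hYL, hYne⟩ := exists_listColoring Prod.fst col (fun e => (e.2 : ℕ))
    (fun e => L e.1) R hrowInj hcolInj
    fun e he => (card_galvinAdj_reducedEdgeSet_lt d col hcolInj he).trans_le (hL e.1)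
  refine ⟨Y, hYL, fun e he f hf h => ?_, fun i e he f hf h => ?_⟩
  · by_contra hne
    exact hYne e he f hf hne (Or.inl (Prod.ext_iff.mp h).1) (Prod.ext_iff.mp h).2
  · by_contra hne
    exact hYne e (hsub i he) f (hsub i hf) hne
      (Or.inr (by rw [hcol_of_mem i e he, hcol_of_mem i f hf])) h

variable {Y : Fin k × Fin n → Fin m}

lemma Xdeg_image_of_injOn {E : Finset (Fin k × Fin n)}
    (hY : Set.InjOn (fun e => (e.1, Y e)) E) (x : Fin k) :
    Xdeg (E.image fun e => (e.1, Y e)) x = Xdeg E x := by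
  rw [Xdeg, filter_image, card_image_of_injOn (hY.mono (filter_subset _ _))]
  rfl

lemma isStarForest_image_of_injOn {E : Finset (Fin k × Fin n)} (hY : Set.InjOn Y E) :
    IsStarForest (E.image fun e => (e.1, Y e)) := by
  intro y
  rw [Ydeg, filter_image]
  refine card_image_le.trans (card_le_one.mpr fun e he f hf => ?_)
  exact hY (filter_subset _ _ he) (filter_subset _ _ hf)
    ((mem_filter.mp he).2.trans (mem_filter.mp hf).2.symm)

end Reduced

/-- **Extension Lemma.** If the reduced graph `G_R` of a bipartite graph `G` with parts
`A` and `B` admits a decomposition into star forests `F' 1, …, F' t` with centers in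
`A`, then `G` admits a decomposition into star forests `F 1, …, F t` with centers in
`A` such that every `a j` has the same degree in `F i` as in `F' i`
(in particular `F i ≅ F' i`). -/
theorem statement9 (k m t : ℕ) (G : Finset (Fin k × Fin m))
    (F' : Fin t → Finset (Fin k × Fin (Finset.univ.sup (Xdeg G))))
    (hdisj' : ∀ i j, i ≠ j → Disjoint (F' i) (F' j))
    (hunion' : Finset.univ.biUnion F' =
      Finset.univ.filter
        (fun e : Fin k × Fin (Finset.univ.sup (Xdeg G)) =>
          (e.2 : ℕ) + 1 ≤ Xdeg G e.1))
    (hstar' : ∀ i, IsStarForest (F' i)) :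
    ∃ F : Fin t → Finset (Fin k × Fin m),
      (∀ i j, i ≠ j → Disjoint (F i) (F j)) ∧
      Finset.univ.biUnion F = G ∧
      (∀ i, IsStarForest (F i)) ∧
      (∀ (i : Fin t) (x : Fin k), Xdeg (F i) x = Xdeg (F' i) x) := by
  classical
  change univ.biUnion F' = reducedEdgeSet _ (Xdeg G) at hunion'
  have : ∀ _ : Fin k × Fin (univ.sup (Xdeg G)), Nonempty (Fin m) := fun e => by
    obtain ⟨x, -, hx⟩ := Finset.lt_sup_iff.mp e.2.isLt
    obtain ⟨p, -⟩ := card_pos.mp ((Nat.zero_le _).trans_lt hx)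
    exact ⟨p.2⟩
  obtain ⟨Y, hYG, hφ, hYstar⟩ := exists_lift_of_starForest_partition (Xdeg G)
    (fun x => {y | (x, y) ∈ G}) (fun x => (Xdeg_eq_card_filter G x).le) F' hdisj' hunion' hstar'
  have hsub : ∀ i, F' i ⊆ reducedEdgeSet _ (Xdeg G) :=
    fun i => hunion' ▸ subset_biUnion_of_mem F' (mem_univ i)
  refine ⟨fun i => (F' i).image fun e => (e.1, Y e),
    fun i j hij => disjoint_image_of_injOn hφ (hsub i) (hsub j) (hdisj' i j hij), ?_,
    fun i => isStarForest_image_of_injOn (hYstar i),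
    fun i => Xdeg_image_of_injOn (hφ.mono (hsub i))⟩
  rw [← biUnion_image, hunion']
  refine eq_of_subset_of_card_le (image_subset_iff.mpr fun e he => ?_) ?_
  · simpa using hYG e he
  · rw [card_image_of_injOn hφ]
    exact (card_reducedEdgeSet_Xdeg G fun x => le_sup (mem_univ x)).ge
end
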